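/- arXiv:2202.11689 — 5 statements merged into one kernel-verified Lean document; each statement's English description precedes it below -/
import Mathlib

section
/- Let φ : ℝⁿ → ℝⁿ and ψ : ℝⁿ → ℝˡ, let φ_d : ℝⁿ×ℝⁿ → ℝⁿ be a decomposition function of φ and ψ_d : ℝⁿ×ℝⁿ → ℝˡ be a decomposition function of ψ, and let L ∈ ℝ^{n×l}. Define f_{νd}(x₁,x₂) := φ_d(x₁,x₂) − L⁺ ψ_d(x₂,x₁) + L⁻ ψ_d(x₁,x₂). Then f_{νd} is a decomposition function of the map x ↦ φ(x) − L ψ(x): f_{νd}(x,x) = φ(x) − Lψ(x) for all x; f_{νd} is monotone nondecreasing in its first argument; and f_{νd} is monotone nonincreasing in its second argument. -/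
open Matrix

/-- Entrywise positive part `M⁺ = max(M,0)`. -/
noncomputable def entPos {p n : ℕ} (M : Matrix (Fin p) (Fin n) ℝ) : Matrix (Fin p) (Fin n) ℝ :=
  Matrix.of fun i j => max (M i j) 0

/-- Entrywise negative part `M⁻ = M⁺ - M`. -/
noncomputable def entNeg {p n : ℕ} (M : Matrix (Fin p) (Fin n) ℝ) : Matrix (Fin p) (Fin n) ℝ :=
  entPos M - M

/-- Entrywise absolute value `|M| = M⁺ + M⁻`. -/
noncomputable def entAbs {p n : ℕ} (M : Matrix (Fin p) (Fin n) ℝ) : Matrix (Fin p) (Fin n) ℝ :=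
  entPos M + entNeg M

/-- `M^d`: the diagonal matrix with the same diagonal as `M`. -/
def diagPart {n : ℕ} (M : Matrix (Fin n) (Fin n) ℝ) : Matrix (Fin n) (Fin n) ℝ :=
  Matrix.diagonal fun i => M i i

/-- `M^{nd} = M - M^d`. -/
def offDiagPart {n : ℕ} (M : Matrix (Fin n) (Fin n) ℝ) : Matrix (Fin n) (Fin n) ℝ := M - diagPart M

/-- `M^m = M^d + |M^{nd}|`. -/
noncomputable def metzPart {n : ℕ} (M : Matrix (Fin n) (Fin n) ℝ) : Matrix (Fin n) (Fin n) ℝ :=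
  diagPart M + entAbs (offDiagPart M)

/-- A square real matrix is Metzler if all off-diagonal entries are nonnegative. -/
def Metzler {n : ℕ} (M : Matrix (Fin n) (Fin n) ℝ) : Prop := ∀ i j, i ≠ j → 0 ≤ M i j

/-- `gd` is a (discrete-time mixed-monotone) decomposition function of `g`. -/
def IsDecompositionFunction {n p : ℕ} (g : (Fin n → ℝ) → Fin p → ℝ)
    (gd : (Fin n → ℝ) → (Fin n → ℝ) → Fin p → ℝ) : Prop :=
  (∀ x, gd x x = g x) ∧
  (∀ x x' x₂, x ≤ x' → gd x x₂ ≤ gd x' x₂) ∧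
  (∀ x x' x₁, x ≤ x' → gd x₁ x' ≤ gd x₁ x)


lemma mulVec_mono {p m : ℕ} (M : Matrix (Fin p) (Fin m) ℝ) (hM : ∀ i j, 0 ≤ M i j)
    {v w : Fin m → ℝ} (h : v ≤ w) : M.mulVec v ≤ M.mulVec w := by
  intro i
  simp only [Matrix.mulVec, dotProduct]
  exact Finset.sum_le_sum fun j _ => mul_le_mul_of_nonneg_left (h j) (hM i j)

lemma entPos_nonneg {p m : ℕ} (M : Matrix (Fin p) (Fin m) ℝ) : ∀ i j, 0 ≤ entPos M i j :=
  fun i j => le_max_right _ _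

lemma entNeg_nonneg {p m : ℕ} (M : Matrix (Fin p) (Fin m) ℝ) : ∀ i j, 0 ≤ entNeg M i j := by
  intro i j
  simp only [entNeg, entPos, Matrix.sub_apply, Matrix.of_apply, sub_nonneg]
  exact le_max_left _ _

/-- nonlinear embedding — decomposition function of `x ↦ φ(x) − Lψ(x)`. -/
theorem statement7 {n l : ℕ} (φ : (Fin n → ℝ) → Fin n → ℝ) (ψ : (Fin n → ℝ) → Fin l → ℝ)
    (φd : (Fin n → ℝ) → (Fin n → ℝ) → Fin n → ℝ)
    (ψd : (Fin n → ℝ) → (Fin n → ℝ) → Fin l → ℝ)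
    (hφ : IsDecompositionFunction φ φd) (hψ : IsDecompositionFunction ψ ψd)
    (L : Matrix (Fin n) (Fin l) ℝ)
    (fνd : (Fin n → ℝ) → (Fin n → ℝ) → Fin n → ℝ)
    (hfνd : ∀ x₁ x₂, fνd x₁ x₂ =
      φd x₁ x₂ - (entPos L).mulVec (ψd x₂ x₁) + (entNeg L).mulVec (ψd x₁ x₂)) :
    IsDecompositionFunction (fun x => φ x - L.mulVec (ψ x)) fνd := by
  obtain ⟨hφ1, hφ2, hφ3⟩ := hφ
  obtain ⟨hψ1, hψ2, hψ3⟩ := hψ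
  refine ⟨fun x => ?_, fun x x' x₂ h => ?_, fun x x' x₁ h => ?_⟩
  · rw [hfνd, hφ1, hψ1]
    funext i
    simp only [Pi.add_apply, Pi.sub_apply, Matrix.mulVec, dotProduct, entNeg,
      Matrix.sub_apply]
    rw [sub_add, ← Finset.sum_sub_distrib]
    congr 1
    apply Finset.sum_congr rfl
    intro j _
    ring
  · rw [hfνd, hfνd]
    refine add_le_add (sub_le_sub (hφ2 x x' x₂ h) ?_) ?_
    · exact mulVec_mono _ (entPos_nonneg L) (hψ3 x x' x₂ h)
    · exact mulVec_mono _ (entNeg_nonneg L) (hψ2 x x' x₂ h)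
  · rw [hfνd, hfνd]
    refine add_le_add (sub_le_sub (hφ3 x x' x₁ h) ?_) ?_
    · exact mulVec_mono _ (entPos_nonneg L) (hψ2 x x' x₁ h)
    · exact mulVec_mono _ (entNeg_nonneg L) (hψ3 x x' x₁ h)
end

section
/- Let g : ℝⁿ → ℝⁿ have a decomposition function g_d : ℝⁿ × ℝⁿ → ℝⁿ. Let (x_t)_{t∈ℕ}, (x̄_t)_{t∈ℕ}, (x̲_t)_{t∈ℕ} be sequences in ℝⁿ satisfying x_{t+1} = g(x_t), x̄_{t+1} = g_d(x̄_t, x̲_t) and x̲_{t+1} = g_d(x̲_t, x̄_t) for all t ∈ ℕ, with x̲₀ ≤ x₀ ≤ x̄₀. Then x̲_t ≤ x_t ≤ x̄_t for all t ∈ ℕ (the embedding system state frames the true state trajectory). -/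
open Matrix

/-- state framer property of the discrete-time embedding system. -/
theorem statement9 {n : ℕ} (g : (Fin n → ℝ) → Fin n → ℝ)
    (gd : (Fin n → ℝ) → (Fin n → ℝ) → Fin n → ℝ)
    (hgd : IsDecompositionFunction g gd)
    (x xu xl : ℕ → Fin n → ℝ)
    (hx : ∀ t, x (t + 1) = g (x t))
    (hxu : ∀ t, xu (t + 1) = gd (xu t) (xl t))
    (hxl : ∀ t, xl (t + 1) = gd (xl t) (xu t))
    (h0l : xl 0 ≤ x 0) (h0u : x 0 ≤ xu 0) :
    ∀ t, xl t ≤ x t ∧ x t ≤ xu t := by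
  obtain ⟨heq, hmon1, hmon2⟩ := hgd
  intro t
  induction t with
  | zero => exact ⟨h0l, h0u⟩
  | succ t ih =>
    obtain ⟨hl, hu⟩ := ih
    constructor
    · rw [hxl, hx, ← heq (x t)]
      exact le_trans (hmon1 _ _ _ hl) (hmon2 _ _ _ hu)
    · rw [hxu, hx, ← heq (x t)]
      exact le_trans (hmon2 _ _ _ hl) (hmon1 _ _ _ hu)
end

section
/- (Interval-width bounding for Jacobian sign-stable mappings.) Let X ⊆ ℝⁿ be convex and let f : X → ℝᵖ be differentiable with J̲ ≤ J_f(x) ≤ J̄ entrywise for all x ∈ X, where J̲, J̄ ∈ ℝ^{p×n}. Let H ∈ ℝ^{p×n} satisfy H_{ij} ∈ {J̲_{ij}, J̄_{ij}} for every (i,j), and set μ(x) := f(x) − H x. For each i ∈ {1,…,p}, let D_i be the diagonal 0/1 matrix with (D_i)_{jj} = 1 if (J̄ − H)_{ij} ≥ 0 and (D_i)_{jj} = 0 otherwise. Define F̄_μ := 2·max(J̄ − H, 0) − J̲ + H (entrywise maximum). Then for all x̲ ≤ x̄ with the interval [x̲, x̄] contained in X, and for every i ∈ {1,…,p}: μ_i(D_i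 x̄ + (I − D_i) x̲) − μ_i(D_i x̲ + (I − D_i) x̄) ≤ (F̄_μ (x̄ − x̲))_i. -/
open Matrix

/-!
Let `a` and `b` be the two corners of `[x̲, x̄]` selected by `D i`, so that
`|a_j - b_j| = x̄_j - x̲_j`. On the segment from `b` to `a` the derivative of `μ_i` is
`∑_j (J_f - H)_{ij} (a_j - b_j)`, and `J̲ ≤ J_f ≤ J̄` gives
`|(J_f - H)_{ij}| ≤ max (J̄ - H, H - J̲)_{ij} ≤ (F̄_μ)_{ij}`. The mean value inequality
then bounds even `|μ_i a - μ_i b|` by `(F̄_μ (x̄ - x̲))_i`.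
-/

open Set

lemma abs_sub_le_two_mul_max_sub_add {lo J hi h : ℝ} (hlo : lo ≤ J) (hhi : J ≤ hi) :
    |J - h| ≤ 2 * max (hi - h) 0 - lo + h := by
  rw [abs_le]
  constructor <;> linarith [le_max_left (hi - h) 0, le_max_right (hi - h) 0]

lemma abs_mulVec_apply_le {ι κ : Type*} [Fintype κ] {M B : Matrix ι κ ℝ} {i : ι}
    (hMB : ∀ j, |M i j| ≤ B i j) (v : κ → ℝ) :
    |(M *ᵥ v) i| ≤ ∑ j, B i j * |v j| :=
  calc |(M *ᵥ v) i| = |∑ j, M i j * v j| := rfl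
    _ ≤ ∑ j, |M i j * v j| := Finset.abs_sum_le_sum_abs _ _
    _ ≤ ∑ j, B i j * |v j| := Finset.sum_le_sum fun j _ => by
      rw [abs_mul]; exact mul_le_mul_of_nonneg_right (hMB j) (abs_nonneg _)

theorem abs_apply_sub_le_of_hasFDerivWithinAt {ι κ : Type*} [Fintype ι] [Fintype κ]
    {S : Set (κ → ℝ)} {g : (κ → ℝ) → ι → ℝ} {J : (κ → ℝ) → Matrix ι κ ℝ}
    (hg : ∀ x ∈ S, HasFDerivWithinAt g (LinearMap.toContinuousLinearMap (J x).mulVecLin) S x)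
    {B : Matrix ι κ ℝ} {i : ι} (hB : ∀ x ∈ S, ∀ j, |J x i j| ≤ B i j)
    {a b : κ → ℝ} (hab : segment ℝ b a ⊆ S) :
    |g a i - g b i| ≤ ∑ j, B i j * |a j - b j| := by
  set γ : ℝ → κ → ℝ := fun t => b + t • (a - b)
  have hγS : MapsTo γ (Icc 0 1) S := fun t ht =>
    hab (segment_eq_image' ℝ b a ▸ mem_image_of_mem γ ht)
  have hγ : ∀ t, HasDerivAt γ (a - b) t := fun t => by
    simpa [γ] using ((hasDerivAt_id t).smul_const (a - b)).const_add b
  have hφ : ∀ t ∈ Icc (0 : ℝ) 1,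
      HasDerivWithinAt (fun t => g (γ t) i) ((J (γ t) *ᵥ (a - b)) i) (Icc 0 1) t :=
    fun t ht => hasDerivWithinAt_pi.1
      ((hg _ (hγS ht)).comp_hasDerivWithinAt t (hγ t).hasDerivWithinAt hγS) i
  have hbound : ∀ t ∈ Ico (0 : ℝ) 1, ‖(J (γ t) *ᵥ (a - b)) i‖ ≤ ∑ j, B i j * |a j - b j| :=
    fun t ht => abs_mulVec_apply_le (hB _ (hγS (Ico_subset_Icc_self ht))) (a - b)
  simpa [γ, Real.norm_eq_abs] using
    norm_image_sub_le_of_norm_deriv_le_segment' hφ hbound 1 (right_mem_Icc.2 zero_le_one)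

theorem HasFDerivWithinAt.sub_mulVec {ι κ : Type*} [Fintype ι] [Fintype κ]
    {f : (κ → ℝ) → ι → ℝ} {J : Matrix ι κ ℝ} {s : Set (κ → ℝ)} {x : κ → ℝ}
    (hf : HasFDerivWithinAt f (LinearMap.toContinuousLinearMap J.mulVecLin) s x)
    (H : Matrix ι κ ℝ) :
    HasFDerivWithinAt (fun y => f y - H *ᵥ y)
      (LinearMap.toContinuousLinearMap (J - H).mulVecLin) s x := by
  have hJH : LinearMap.toContinuousLinearMap (J - H).mulVecLin
      = LinearMap.toContinuousLinearMap J.mulVecLin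
        - LinearMap.toContinuousLinearMap H.mulVecLin := by
    ext : 1; simp
  rw [hJH]
  exact hf.sub (LinearMap.toContinuousLinearMap H.mulVecLin).hasFDerivWithinAt

lemma diagonal_ite_mulVec_add_one_sub_mulVec {κ R : Type*} [Fintype κ] [DecidableEq κ] [Ring R]
    (P : κ → Prop) [DecidablePred P] (u v : κ → R) :
    (Matrix.diagonal fun j => if P j then (1 : R) else 0) *ᵥ u
        + (1 - Matrix.diagonal fun j => if P j then (1 : R) else 0) *ᵥ v
      = fun j => if P j then u j else v j := by
  ext j
  simp only [Pi.add_apply, Matrix.sub_mulVec, Matrix.one_mulVec, Matrix.mulVec_diagonal,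
    Pi.sub_apply]
  split_ifs <;> simp

lemma segment_ite_subset_Icc {κ : Type*} (P : κ → Prop) [DecidablePred P] {lo hi : κ → ℝ}
    (hle : lo ≤ hi) :
    segment ℝ (fun j => if P j then lo j else hi j) (fun j => if P j then hi j else lo j)
      ⊆ Icc lo hi := by
  have hmem : ∀ u v : κ → ℝ, u ∈ Icc lo hi → v ∈ Icc lo hi →
      (fun j => if P j then u j else v j) ∈ Icc lo hi := fun u v hu hv =>
    ⟨fun j => by dsimp only; split_ifs; exacts [hu.1 j, hv.1 j],
     fun j => by dsimp only; split_ifs; exacts [hu.2 j, hv.2 j]⟩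
  have hlo : lo ∈ Icc lo hi := left_mem_Icc.2 hle
  have hhi : hi ∈ Icc lo hi := right_mem_Icc.2 hle
  exact (convex_Icc lo hi).segment_subset (hmem _ _ hlo hhi) (hmem _ _ hhi hlo)

theorem statement12_general {n p : ℕ} (X : Set (Fin n → ℝ))
    (f : (Fin n → ℝ) → Fin p → ℝ)
    (Jf : (Fin n → ℝ) → Matrix (Fin p) (Fin n) ℝ)
    (hderiv : ∀ x ∈ X, HasFDerivWithinAt f (LinearMap.toContinuousLinearMap (Jf x).mulVecLin) X x)
    (Jlo Jhi : Matrix (Fin p) (Fin n) ℝ)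
    (hJ : ∀ x ∈ X, ∀ i j, Jlo i j ≤ Jf x i j ∧ Jf x i j ≤ Jhi i j)
    (H : Matrix (Fin p) (Fin n) ℝ)
    (μ : (Fin n → ℝ) → Fin p → ℝ) (hμ : ∀ x, μ x = f x - H.mulVec x)
    (D : Fin p → Matrix (Fin n) (Fin n) ℝ)
    (hD : ∀ i, D i = Matrix.diagonal fun j => if 0 ≤ (Jhi - H) i j then (1 : ℝ) else 0)
    (F : Matrix (Fin p) (Fin n) ℝ)
    (hF : F = (2 : ℝ) • entPos (Jhi - H) - Jlo + H)
    (xlo xhi : Fin n → ℝ) (hle : xlo ≤ xhi)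
    (hsub : ∀ z : Fin n → ℝ, xlo ≤ z → z ≤ xhi → z ∈ X) :
    ∀ i : Fin p,
      μ ((D i).mulVec xhi + ((1 : Matrix (Fin n) (Fin n) ℝ) - D i).mulVec xlo) i
        - μ ((D i).mulVec xlo + ((1 : Matrix (Fin n) (Fin n) ℝ) - D i).mulVec xhi) i
      ≤ F.mulVec (xhi - xlo) i := by
  intro i
  obtain rfl : μ = fun x => f x - H *ᵥ x := funext hμ
  have hJF : ∀ x ∈ X, ∀ j, |(Jf x - H) i j| ≤ F i j := fun x hx j => by
    simpa [hF, entPos] using abs_sub_le_two_mul_max_sub_add (hJ x hx i j).1 (hJ x hx i j).2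
  rw [hD, diagonal_ite_mulVec_add_one_sub_mulVec, diagonal_ite_mulVec_add_one_sub_mulVec]
  refine (le_abs_self _).trans ((abs_apply_sub_le_of_hasFDerivWithinAt
    (fun x hx => (hderiv x hx).sub_mulVec H) hJF
    ((segment_ite_subset_Icc _ hle).trans fun z hz => hsub z hz.1 hz.2)).trans_eq ?_)
  refine Finset.sum_congr rfl fun j _ => ?_
  have hj := sub_nonneg.2 (hle j)
  split_ifs
  · rw [abs_of_nonneg hj]; rfl
  · rw [abs_sub_comm, abs_of_nonneg hj]; rfl

/-- interval-width bounding for Jacobian sign-stable mappings. -/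
theorem statement12 {n p : ℕ} (X : Set (Fin n → ℝ)) (hX : Convex ℝ X)
    (f : (Fin n → ℝ) → Fin p → ℝ)
    (Jf : (Fin n → ℝ) → Matrix (Fin p) (Fin n) ℝ)
    (hderiv : ∀ x ∈ X, HasFDerivWithinAt f (LinearMap.toContinuousLinearMap (Jf x).mulVecLin) X x)
    (Jlo Jhi : Matrix (Fin p) (Fin n) ℝ)
    (hJ : ∀ x ∈ X, ∀ i j, Jlo i j ≤ Jf x i j ∧ Jf x i j ≤ Jhi i j)
    (H : Matrix (Fin p) (Fin n) ℝ)
    (hH : ∀ i j, H i j = Jlo i j ∨ H i j = Jhi i j)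
    (μ : (Fin n → ℝ) → Fin p → ℝ) (hμ : ∀ x, μ x = f x - H.mulVec x)
    (D : Fin p → Matrix (Fin n) (Fin n) ℝ)
    (hD : ∀ i, D i = Matrix.diagonal fun j => if 0 ≤ (Jhi - H) i j then (1 : ℝ) else 0)
    (F : Matrix (Fin p) (Fin n) ℝ)
    (hF : F = (2 : ℝ) • entPos (Jhi - H) - Jlo + H)
    (xlo xhi : Fin n → ℝ) (hle : xlo ≤ xhi)
    (hsub : ∀ z : Fin n → ℝ, xlo ≤ z → z ≤ xhi → z ∈ X) :
    ∀ i : Fin p,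
      μ ((D i).mulVec xhi + ((1 : Matrix (Fin n) (Fin n) ℝ) - D i).mulVec xlo) i
        - μ ((D i).mulVec xlo + ((1 : Matrix (Fin n) (Fin n) ℝ) - D i).mulVec xhi) i
      ≤ F.mulVec (xhi - xlo) i :=
  statement12_general X f Jf hderiv Jlo Jhi hJ H μ hμ D hD F hF xlo xhi hle hsub
end

section
/- (Discrete-time framer-error dynamics and comparison bound.) Let A ∈ ℝ^{n×n}, C ∈ ℝ^{l×n}, L ∈ ℝ^{n×l}, let φ_d : ℝⁿ×ℝⁿ → ℝⁿ and ψ_d : ℝⁿ×ℝⁿ → ℝˡ be arbitrary maps, and let (x̄_t), (x̲_t) satisfy the observer recursions x̄_{t+1} = (A−LC)⁺ x̄_t − (A−LC)⁻ x̲_t + v_t + φ_d(x̄_t, x̲_t) − L⁺ ψ_d(x̲_t, x̄_t) + L⁻ ψ_d(x̄_t, x̲_t) and x̲_{t+1} = (A−LC)⁺ x̲_t − (A−LC)⁻ x̄_t + v_t + φ_d(x̲_t, x̄_t) − L⁺ ψ_d(x̄_t, x̲_t) + L⁻ ψ_d(x̲_t, x̄_t), where v_t ∈ ℝⁿ is any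 common input sequence. Let ε_t := x̄_t − x̲_t, Δφ_d(t) := φ_d(x̄_t,x̲_t) − φ_d(x̲_t,x̄_t) and Δψ_d(t) := ψ_d(x̄_t,x̲_t) − ψ_d(x̲_t,x̄_t). Then ε_{t+1} = |A − LC| ε_t + Δφ_d(t) + |L| Δψ_d(t) for all t. If moreover ε_t ≥ 0 and there are matrices F̄_φ ∈ ℝ^{n×n}, F̄_ψ ∈ ℝ^{l×n} with Δφ_d(t) ≤ F̄_φ ε_t and Δψ_d(t) ≤ F̄_ψ ε_t, then ε_{t+1} ≤ (|A| + |LC| + F̄_φ + |L| F̄_ψ) ε_t. -/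
open Matrix

lemma entAbs_apply {p n : ℕ} (M : Matrix (Fin p) (Fin n) ℝ) (i j) :
    entAbs M i j = |M i j| := by
  simp only [entAbs, entPos, entNeg, Matrix.add_apply, Matrix.sub_apply, Matrix.of_apply]
  rcases le_total (M i j) 0 with h | h
  · rw [max_eq_right h, abs_of_nonpos h]; ring
  · rw [max_eq_left h, abs_of_nonneg h]; ring

/-- discrete-time framer-error dynamics and comparison bound. -/
theorem statement13 {n l : ℕ} (A : Matrix (Fin n) (Fin n) ℝ) (C : Matrix (Fin l) (Fin n) ℝ)
    (L : Matrix (Fin n) (Fin l) ℝ)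
    (φd : (Fin n → ℝ) → (Fin n → ℝ) → Fin n → ℝ)
    (ψd : (Fin n → ℝ) → (Fin n → ℝ) → Fin l → ℝ)
    (v : ℕ → Fin n → ℝ) (xu xl : ℕ → Fin n → ℝ)
    (hxu : ∀ t, xu (t + 1) =
      (entPos (A - L * C)).mulVec (xu t) - (entNeg (A - L * C)).mulVec (xl t)
        + v t + φd (xu t) (xl t)
        - (entPos L).mulVec (ψd (xl t) (xu t)) + (entNeg L).mulVec (ψd (xu t) (xl t)))
    (hxl : ∀ t, xl (t + 1) =
      (entPos (A - L * C)).mulVec (xl t) - (entNeg (A - L * C)).mulVec (xu t)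
        + v t + φd (xl t) (xu t)
        - (entPos L).mulVec (ψd (xu t) (xl t)) + (entNeg L).mulVec (ψd (xl t) (xu t)))
    (ε : ℕ → Fin n → ℝ) (hε : ∀ t, ε t = xu t - xl t)
    (Δφ : ℕ → Fin n → ℝ) (hΔφ : ∀ t, Δφ t = φd (xu t) (xl t) - φd (xl t) (xu t))
    (Δψ : ℕ → Fin l → ℝ) (hΔψ : ∀ t, Δψ t = ψd (xu t) (xl t) - ψd (xl t) (xu t)) :
    -- error dynamics
    (∀ t, ε (t + 1) =
      (entAbs (A - L * C)).mulVec (ε t) + Δφ t + (entAbs L).mulVec (Δψ t)) ∧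
    -- comparison bound
    (∀ (Fφ : Matrix (Fin n) (Fin n) ℝ) (Fψ : Matrix (Fin l) (Fin n) ℝ),
      (∀ t, 0 ≤ ε t) →
      (∀ t, Δφ t ≤ Fφ.mulVec (ε t)) →
      (∀ t, Δψ t ≤ Fψ.mulVec (ε t)) →
      ∀ t, ε (t + 1) ≤
        (entAbs A + entAbs (L * C) + Fφ + (entAbs L) * Fψ).mulVec (ε t)) := by

  have key : ∀ t, ε (t + 1) =
      (entAbs (A - L * C)).mulVec (ε t) + Δφ t + (entAbs L).mulVec (Δψ t) := by
    intro t
    rw [hε, hxu, hxl, hΔφ, hΔψ]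
    simp only [entAbs, Matrix.add_mulVec, Matrix.mulVec_sub, hε]
    abel
  refine ⟨key, ?_⟩
  intro Fφ Fψ hpos hφ hψ t
  rw [key t]
  intro i
  have hεt := hpos t
  simp only [Matrix.add_mulVec, Pi.add_apply, Matrix.mulVec, dotProduct,
    Matrix.mul_apply, Pi.sub_apply]
  have h1 : ∑ j, entAbs (A - L * C) i j * ε t j ≤
      ∑ j, (entAbs A i j + entAbs (L * C) i j) * ε t j := by
    apply Finset.sum_le_sum
    intro j _
    apply mul_le_mul_of_nonneg_right _ (hεt j)
    rw [entAbs_apply, entAbs_apply, entAbs_apply, Matrix.sub_apply]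
    exact abs_sub (A i j) ((L * C) i j)
  have h2 : Δφ t i ≤ ∑ j, Fφ i j * ε t j := hφ t i
  have h3 : ∑ k, entAbs L i k * Δψ t k ≤ ∑ j, (∑ k, entAbs L i k * Fψ k j) * ε t j := by
    have : ∑ k, entAbs L i k * Δψ t k ≤ ∑ k, entAbs L i k * (∑ j, Fψ k j * ε t j) := by
      apply Finset.sum_le_sum
      intro k _
      apply mul_le_mul_of_nonneg_left (hψ t k)
      rw [entAbs_apply]; exact abs_nonneg _
    refine this.trans (le_of_eq ?_)
    simp only [Finset.mul_sum, Finset.sum_mul]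
    rw [Finset.sum_comm]
    exact Finset.sum_congr rfl fun j _ => Finset.sum_congr rfl fun k _ => by ring
  calc ∑ j, entAbs (A - L * C) i j * ε t j + Δφ t i + ∑ k, entAbs L i k * Δψ t k
      ≤ ∑ j, (entAbs A i j + entAbs (L * C) i j) * ε t j + (∑ j, Fφ i j * ε t j)
        + ∑ j, (∑ k, entAbs L i k * Fψ k j) * ε t j := by
        exact add_le_add (add_le_add h1 h2) h3
    _ = ∑ j, (entAbs A i j + entAbs (L * C) i j + Fφ i j + ∑ k, entAbs L i k * Fψ k j) * ε t j := by
        rw [← Finset.sum_add_distrib, ← Finset.sum_add_distrib]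
        apply Finset.sum_congr rfl
        intro j _
        ring
end

section
/- (Continuous-time positive comparison principle.) Let M ∈ ℝ^{n×n} be Metzler and Hurwitz (every eigenvalue of M has strictly negative real part), and let ε : [0,∞) → ℝⁿ be differentiable with ε_t ≥ 0 and dε_t/dt ≤ M ε_t componentwise for all t ≥ 0. Then ε_t → 0 as t → ∞. -/
open Matrix

/-!
For small `c > 0` the matrix `B = 1 + c • M` is entrywise nonnegative (`M` is Metzler) and its
eigenvalues `1 + c ν` lie in the open unit disc (`Re ν < 0`). By Gelfand's formula the Neumann
series `N = ∑ Bᵐ` converges; it is entrywise nonnegative, has diagonal `≥ 1` and satisfies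
`N (1 - B) = 1`, i.e. `c • N M = -1`. Hence `v = c • 1ᵀ N` is a positive vector with `vᵀ M = -1ᵀ`,
and `V = v ⬝ᵥ ε` is a linear Lyapunov function: `V' ≤ -∑ εᵢ ≤ -V / (1 + ∑ vᵢ)`, so `V` decays
exponentially by Grönwall, and so does each `0 ≤ εᵢ ≤ V / vᵢ`.
-/

open Filter Topology
open scoped NNReal

theorem summable_norm_pow_of_forall_norm_lt_one {A : Type*} [NormedRing A] [NormedAlgebra ℂ A]
    [CompleteSpace A] (a : A) (h : ∀ z ∈ spectrum ℂ a, ‖z‖ < 1) :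
    Summable fun m : ℕ => ‖a ^ m‖ := by
  rcases subsingleton_or_nontrivial A with hA | hA
  · simp [Subsingleton.elim _ (0 : A)]
  have hρ : spectralRadius ℂ a < (1 : ℝ≥0) :=
    spectrum.spectralRadius_lt_of_forall_lt a fun z hz => by exact_mod_cast h z hz
  obtain ⟨r, hρr, hr1⟩ := ENNReal.lt_iff_exists_nnreal_btwn.mp hρ
  refine .of_norm_bounded_eventually_nat
    (summable_geometric_of_lt_one r.2 (by exact_mod_cast hr1)) ?_
  have hgelfand := spectrum.pow_nnnorm_pow_one_div_tendsto_nhds_spectralRadius a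
  filter_upwards [hgelfand.eventually_lt_const hρr, eventually_gt_atTop 0] with m hm hm0
  rw [one_div, ENNReal.rpow_inv_lt_iff (by positivity), ENNReal.rpow_natCast, ← ENNReal.coe_pow,
    ENNReal.coe_lt_coe, ← NNReal.coe_lt_coe, coe_nnnorm, NNReal.coe_pow] at hm
  simpa using hm.le

section MatrixSpectrum

variable {ι : Type*} [Fintype ι] [DecidableEq ι]

attribute [local instance] Matrix.linftyOpNormedRing Matrix.linftyOpNormedAlgebra in
theorem Matrix.summable_pow_of_forall_norm_lt_one (B : Matrix ι ι ℝ)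
    (h : ∀ z ∈ spectrum ℂ (B.map (algebraMap ℝ ℂ)), ‖z‖ < 1) : Summable fun m : ℕ => B ^ m := by
  have hc := (summable_norm_pow_of_forall_norm_lt_one _ h).of_norm
  refine Pi.summable.2 fun i => Pi.summable.2 fun j => ?_
  have := Pi.summable.1 (Pi.summable.1 hc i) j
  simp only [← Matrix.map_pow] at this
  exact Complex.summable_ofReal.1 this

theorem Matrix.exists_nonneg_mul_one_sub_eq_one {B : Matrix ι ι ℝ} (hB : ∀ i j, 0 ≤ B i j)
    (h : ∀ z ∈ spectrum ℂ (B.map (algebraMap ℝ ℂ)), ‖z‖ < 1) :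
    ∃ N : Matrix ι ι ℝ, (∀ i j, 0 ≤ N i j) ∧ N * (1 - B) = 1 := by
  have hs := B.summable_pow_of_forall_norm_lt_one h
  refine ⟨∑' m, B ^ m, fun i j => ?_, hs.tsum_pow_mul_one_sub⟩
  exact (Pi.hasSum.1 (Pi.hasSum.1 hs.hasSum i) j).nonneg fun m => pow_apply_nonneg hB m i j

theorem Matrix.spectrum_map_one_add_smul (M : Matrix ι ι ℝ) {c : ℝ} (hc : c ≠ 0) :
    spectrum ℂ ((1 + c • M).map (algebraMap ℝ ℂ))
      = (fun ν => 1 + (c : ℂ) * ν) '' spectrum ℂ (M.map (algebraMap ℝ ℂ)) := by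
  have hmap : (1 + c • M).map (algebraMap ℝ ℂ)
      = algebraMap ℂ _ 1 + Units.mk0 (c : ℂ) (by exact_mod_cast hc) • M.map (algebraMap ℝ ℂ) := by
    ext i j
    by_cases h : i = j <;> simp [h]
  rw [hmap, ← spectrum.singleton_add_eq, spectrum.unit_smul_eq_smul]
  ext z
  simp only [Set.singleton_add, Set.mem_image, Set.mem_smul_set, Units.smul_def, Units.val_mk0,
    smul_eq_mul]
  exact ⟨fun ⟨_, ⟨ν, hν, hx⟩, hz⟩ => ⟨ν, hν, hx ▸ hz⟩, fun ⟨ν, hν, hz⟩ => ⟨_, ⟨ν, hν, rfl⟩, hz⟩⟩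

end MatrixSpectrum

theorem Complex.eventually_norm_one_add_mul_lt_one {ν : ℂ} (hν : ν.re < 0) :
    ∀ᶠ c : ℝ in 𝓝[>] 0, ‖1 + c * ν‖ < 1 := by
  have hsmall : ∀ᶠ c : ℝ in 𝓝[>] 0, 2 * ν.re + c * ‖ν‖ ^ 2 < 0 :=
    nhdsWithin_le_nhds <| Tendsto.eventually_lt_const (v := 2 * ν.re) (by linarith) <| by
      simpa using ((tendsto_id (x := 𝓝 (0 : ℝ))).mul_const (‖ν‖ ^ 2)).const_add (2 * ν.re)
  filter_upwards [eventually_mem_nhdsWithin, hsmall] with c (hc : 0 < c) hsmall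
  have hsq : ‖1 + c * ν‖ ^ 2 = 1 + c * (2 * ν.re + c * ‖ν‖ ^ 2) := by
    simp only [Complex.sq_norm, Complex.normSq_apply, Complex.add_re, Complex.one_re,
      Complex.mul_re, Complex.ofReal_re, Complex.ofReal_im, zero_mul, sub_zero, Complex.add_im,
      Complex.one_im, Complex.mul_im, add_zero, zero_add]
    ring
  rw [← sq_lt_one_iff₀ (norm_nonneg _), hsq]
  nlinarith

theorem Metzler.exists_pos_vecMul_eq_neg_one {n : ℕ} {M : Matrix (Fin n) (Fin n) ℝ}
    (hM : Metzler M) (hH : ∀ μ ∈ spectrum ℂ (M.map (algebraMap ℝ ℂ)), μ.re < 0) :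
    ∃ v : Fin n → ℝ, (∀ i, 0 < v i) ∧ v ᵥ* M = -1 := by
  have hdiag_small : ∀ i, ∀ᶠ c : ℝ in 𝓝[>] 0, 0 ≤ 1 + c * M i i := fun i =>
    nhdsWithin_le_nhds <| Tendsto.eventually_const_le (v := 1) zero_lt_one <| by
      simpa using ((tendsto_id (x := 𝓝 (0 : ℝ))).mul_const (M i i)).const_add (1 : ℝ)
  obtain ⟨c, hc, hdiag, hspec⟩ : ∃ c : ℝ, 0 < c ∧ (∀ i, 0 ≤ 1 + c * M i i) ∧
      ∀ ν ∈ spectrum ℂ (M.map (algebraMap ℝ ℂ)), ‖1 + c * ν‖ < 1 :=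
    (eventually_mem_nhdsWithin.and ((eventually_all.2 hdiag_small).and
      ((eventually_all_finite (Matrix.finite_spectrum _)).2
        fun ν hν => Complex.eventually_norm_one_add_mul_lt_one (hH ν hν)))).exists
  set B : Matrix (Fin n) (Fin n) ℝ := 1 + c • M with hBdef
  have hB : ∀ i j, 0 ≤ B i j := fun i j => by
    by_cases h : i = j
    · subst h; simpa [hBdef] using hdiag i
    · simpa [hBdef, h] using mul_nonneg hc.le (hM i j h)
  obtain ⟨N, hN, hNB⟩ := exists_nonneg_mul_one_sub_eq_one hB <| by
    rw [hBdef, spectrum_map_one_add_smul M hc.ne']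
    rintro _ ⟨ν, hν, rfl⟩
    exact hspec ν hν
  have hdiagN : ∀ j, 1 ≤ N j j := fun j => by
    have hN1 : N = 1 + N * B := by rw [← hNB]; noncomm_ring
    rw [hN1, Matrix.add_apply, Matrix.one_apply_eq, le_add_iff_nonneg_right, Matrix.mul_apply]
    exact Finset.sum_nonneg fun k _ => mul_nonneg (hN j k) (hB k j)
  have hNM : c • (N * M) = -1 := by
    rw [← neg_eq_iff_eq_neg, ← hNB, hBdef]
    simp
  refine ⟨c • ((fun _ => 1) ᵥ* N), fun j => ?_, ?_⟩
  · have hcol : N j j ≤ ((fun _ => 1) ᵥ* N) j := by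
      simp only [Matrix.vecMul, dotProduct, one_mul]
      exact Finset.single_le_sum (fun i _ => hN i j) (Finset.mem_univ j)
    simpa using mul_pos hc (by linarith [hdiagN j])
  · rw [Matrix.smul_vecMul, Matrix.vecMul_vecMul, ← Matrix.vecMul_smul, hNM, Matrix.vecMul_neg,
      Matrix.vecMul_one]
    rfl

theorem tendsto_zero_of_hasDerivAt_le_mul {V V' : ℝ → ℝ} {K : ℝ} (hK : K < 0)
    (hV : ∀ t ≥ (0 : ℝ), HasDerivAt V (V' t) t) (hpos : ∀ t ≥ (0 : ℝ), 0 ≤ V t)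
    (hle : ∀ t ≥ (0 : ℝ), V' t ≤ K * V t) : Tendsto V atTop (𝓝 0) := by
  have hgronwall : ∀ t ≥ (0 : ℝ), V t ≤ V 0 * Real.exp (K * t) := fun t ht => by
    have := le_gronwallBound_of_liminf_deriv_right_le (f := V) (δ := V 0) (ε := 0) (b := t)
      (fun x hx => (hV x hx.1).continuousAt.continuousWithinAt)
      (fun x hx r hr => (hV x hx.1).hasDerivWithinAt.liminf_right_slope_le hr) le_rfl
      (fun x hx => by simpa using hle x hx.1) t ⟨ht, le_rfl⟩
    rwa [gronwallBound_ε0, sub_zero] at this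
  have hdecay : Tendsto (fun t => V 0 * Real.exp (K * t)) atTop (𝓝 0) := by
    simpa using
      (Real.tendsto_exp_atBot.comp (tendsto_id.const_mul_atTop_of_neg hK)).const_mul (V 0)
  exact squeeze_zero' (eventually_ge_atTop 0 |>.mono hpos)
    (eventually_ge_atTop 0 |>.mono hgronwall) hdecay

theorem tendsto_zero_of_deriv_le_mulVec {ι : Type*} [Fintype ι] {M : Matrix ι ι ℝ} {v : ι → ℝ}
    (hv : ∀ i, 0 < v i) (hvM : v ᵥ* M = -1) {ε ε' : ℝ → ι → ℝ}
    (hderiv : ∀ t ≥ (0 : ℝ), HasDerivAt ε (ε' t) t) (hpos : ∀ t ≥ (0 : ℝ), 0 ≤ ε t)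
    (hcomp : ∀ t ≥ (0 : ℝ), ε' t ≤ M *ᵥ ε t) : Tendsto ε atTop (𝓝 0) := by
  set c := 1 + ∑ i, v i
  have hvc : v ≤ fun _ => c := fun i => by
    have := Finset.single_le_sum (fun j _ => (hv j).le) (Finset.mem_univ i)
    simp only [c]; linarith
  have hc : 0 < c := add_pos_of_pos_of_nonneg one_pos (Finset.sum_nonneg fun i _ => (hv i).le)
  have hV : Tendsto (fun t => v ⬝ᵥ ε t) atTop (𝓝 0) := by
    refine tendsto_zero_of_hasDerivAt_le_mul (V' := fun t => v ⬝ᵥ ε' t)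
      (neg_lt_zero.2 (inv_pos.2 hc))
      (fun t ht => .fun_sum fun i _ => ((hasDerivAt_pi.1 (hderiv t ht)) i).const_mul (v i))
      (fun t ht => dotProduct_nonneg_of_nonneg (fun i => (hv i).le) (hpos t ht)) fun t ht => ?_
    calc v ⬝ᵥ ε' t ≤ v ⬝ᵥ (M *ᵥ ε t) :=
          dotProduct_le_dotProduct_of_nonneg_left (hcomp t ht) fun i => (hv i).le
      _ = -(1 ⬝ᵥ ε t) := by rw [dotProduct_mulVec, hvM, neg_dotProduct]
      _ ≤ -c⁻¹ * (v ⬝ᵥ ε t) := by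
        have hconst : (fun _ => c) ⬝ᵥ ε t = c * (1 ⬝ᵥ ε t) := by
          simp [dotProduct, Finset.mul_sum]
        rw [neg_mul, neg_le_neg_iff, inv_mul_le_iff₀ hc, ← hconst]
        exact dotProduct_le_dotProduct_of_nonneg_right hvc (hpos t ht)
  refine tendsto_pi_nhds.2 fun i =>
    squeeze_zero' (eventually_ge_atTop 0 |>.mono fun t ht => hpos t ht i)
      (eventually_ge_atTop 0 |>.mono fun t ht => ?_) (by simpa using hV.const_mul (v i)⁻¹)
  rw [le_inv_mul_iff₀ (hv i)]
  exact Finset.single_le_sum (f := fun j => v j * ε t j)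
    (fun j _ => mul_nonneg (hv j).le (hpos t ht j)) (Finset.mem_univ i)

/-- continuous-time positive comparison principle. -/
theorem statement19 {n : ℕ} (M : Matrix (Fin n) (Fin n) ℝ)
    (hMetz : Metzler M)
    -- Hurwitz: every (complex) eigenvalue of M has strictly negative real part
    (hHurwitz : ∀ μ ∈ spectrum ℂ (M.map (algebraMap ℝ ℂ)), μ.re < 0)
    (ε ε' : ℝ → Fin n → ℝ)
    (hderiv : ∀ t ≥ (0 : ℝ), HasDerivAt ε (ε' t) t)
    (hpos : ∀ t ≥ (0 : ℝ), 0 ≤ ε t)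
    (hcomp : ∀ t ≥ (0 : ℝ), ε' t ≤ M.mulVec (ε t)) :
    Filter.Tendsto ε Filter.atTop (nhds 0) := by
  obtain ⟨v, hv, hvM⟩ := hMetz.exists_pos_vecMul_eq_neg_one hHurwitz
  exact tendsto_zero_of_deriv_le_mulVec hv hvM hderiv hpos hcomp
end
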